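/- arXiv:2004.12282 — 7 statements merged into one kernel-verified Lean document; each statement's English description precedes it below -/
import Mathlib

section
/- Let A be an m×n real matrix and B a p×n real matrix. There exists an m×p real matrix X such that A + X·B has full column rank if and only if m ≥ n and the stacked matrix col{A, B} (the (m+p)×n matrix obtained by stacking A on top of B) has full column rank. -/
open Matrix

noncomputable section

/-- A real matrix has full column rank (FCR) iff its rank equals its number of columns. -/
def FCR {m n : Type*} [Fintype m] [Fintype n] (A : Matrix m n ℝ) : Prop :=
  A.rank = Fintype.card n

end

/-!
Work with the linear maps `f = A`, `g = B`. If `f + ξ ∘ g` is injective, then so is `f` on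
`ker g`, and `dim V ≤ dim W`. Conversely, let `C` be a complement of `range f` in `W`. Since `g`
is injective on `ker f` and `dim ker f = dim V - rank f ≤ dim W - rank f = dim C`, some
`ξ : U → C` makes `ξ ∘ g` injective on `ker f`. If `f v + ξ (g v) = 0`, then `f v` lies in
`range f ⊓ C = ⊥`, so `v ∈ ker f` and `ξ (g v) = 0`, whence `v = 0`.
-/

open Module LinearMap

namespace LinearMap

variable {K V W U : Type*} [Field K] [AddCommGroup V] [Module K V] [AddCommGroup W] [Module K W]
  [AddCommGroup U] [Module K U]

theorem exists_injective_comp_of_injective_of_finrank_le [FiniteDimensional K V]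
    [FiniteDimensional K W] {h : V →ₗ[K] U} (hh : Function.Injective h)
    (hdim : finrank K V ≤ finrank K W) :
    ∃ ξ : U →ₗ[K] W, Function.Injective (ξ ∘ₗ h) := by
  obtain ⟨γ, hγ⟩ := finrank_le_iff_exists_linearMap.mp hdim
  obtain ⟨r, hr⟩ := h.exists_leftInverse_of_injective (ker_eq_bot.mpr hh)
  exact ⟨γ ∘ₗ r, by rwa [comp_assoc, hr, comp_id]⟩

theorem exists_injective_add_comp_of_disjoint_ker [FiniteDimensional K V]
    [FiniteDimensional K W] (f : V →ₗ[K] W) (g : V →ₗ[K] U)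
    (hdim : finrank K V ≤ finrank K W) (hker : Disjoint (ker f) (ker g)) :
    ∃ ξ : U →ₗ[K] W, Function.Injective (f + ξ ∘ₗ g) := by
  obtain ⟨C, hC⟩ := (range f).exists_isCompl
  have hdimC : finrank K (ker f) ≤ finrank K C := by
    have := f.finrank_range_add_finrank_ker
    have := Submodule.finrank_add_eq_of_isCompl hC
    omega
  obtain ⟨ξ, hξ⟩ := exists_injective_comp_of_injective_of_finrank_le
    (injective_domRestrict_iff.mpr hker) hdimC
  refine ⟨C.subtype ∘ₗ ξ, ?_⟩
  rw [← ker_eq_bot, Submodule.eq_bot_iff]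
  intro v hv
  have hfv : f v = -C.subtype (ξ (g v)) := eq_neg_of_add_eq_zero_left hv
  have hfv0 : f v = 0 := Submodule.disjoint_def.mp hC.disjoint _ (mem_range_self f v)
    (hfv ▸ neg_mem (Submodule.coe_mem _))
  have hξv : ξ (g v) = 0 := by simpa [hfv0] using hfv
  exact congrArg Subtype.val (hξ (a₁ := ⟨v, hfv0⟩) (a₂ := 0) (by simpa using hξv))

theorem exists_injective_add_comp_iff [FiniteDimensional K V] [FiniteDimensional K W]
    (f : V →ₗ[K] W) (g : V →ₗ[K] U) :
    (∃ ξ : U →ₗ[K] W, Function.Injective (f + ξ ∘ₗ g)) ↔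
      finrank K V ≤ finrank K W ∧ Disjoint (ker f) (ker g) := by
  refine ⟨fun ⟨ξ, hξ⟩ ↦ ⟨finrank_le_finrank_of_injective hξ, ?_⟩,
    fun ⟨hdim, hker⟩ ↦ exists_injective_add_comp_of_disjoint_ker f g hdim hker⟩
  rw [Submodule.disjoint_def]
  intro v hf hg
  exact hξ (a₂ := 0) (by simp_all)

end LinearMap

namespace Matrix

theorem fcr_iff_injective_mulVecLin {m n : Type*} [Fintype m] [Fintype n] (A : Matrix m n ℝ) :
    FCR A ↔ Function.Injective A.mulVecLin := by
  have := A.mulVecLin.finrank_range_add_finrank_ker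
  rw [finrank_fintype_fun_eq_card] at this
  rw [FCR, rank, ← ker_eq_bot, ← Submodule.finrank_eq_zero]
  omega

theorem ker_mulVecLin_fromRows {R m₁ m₂ n : Type*} [CommRing R] [Fintype n]
    (A : Matrix m₁ n R) (B : Matrix m₂ n R) :
    ker (fromRows A B).mulVecLin = ker A.mulVecLin ⊓ ker B.mulVecLin := by
  ext v
  simp [fromRows_mulVec, funext_iff, Sum.forall]

end Matrix

/-- Lemma 2: There exists `X` such that `A + X * B` has full column rank
iff `m ≥ n` and the stacked matrix `col{A, B}` has full column rank. -/
theorem exists_X_add_mul_fcr_iff (m n p : ℕ)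
    (A : Matrix (Fin m) (Fin n) ℝ) (B : Matrix (Fin p) (Fin n) ℝ) :
    (∃ X : Matrix (Fin m) (Fin p) ℝ, FCR (A + X * B)) ↔
      (n ≤ m ∧ FCR (Matrix.fromRows A B)) := by
  have key := exists_injective_add_comp_iff A.mulVecLin B.mulVecLin
  rw [finrank_fin_fun, finrank_fin_fun,
    (toLin' (R := ℝ) (m := Fin m) (n := Fin p)).surjective.exists] at key
  simp only [fcr_iff_injective_mulVecLin, mulVecLin_add, mulVecLin_mul, ← ker_eq_bot,
    ker_mulVecLin_fromRows, ← disjoint_iff, ← key, toLin'_apply']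
end

section
/- For j = 1,…,m let A₁^{[j]}, A₂^{[j]}, A₃^{[j]}, B₁^{[j]}, B₂^{[j]}, B₃^{[j]} be real matrices such that for each i ∈ {1,2,3} all A_i^{[j]} have the same number of rows p_i, A_i^{[j]} and B_i^{[j]} have the same number of columns q_{ij}, and all B_i^{[j]} have the same number of rows s. Form the matrix M whose j-th column block is the matrix col{ diag{A₁^{[j]}, A₂^{[j]}, A₃^{[j]}}, [B₁^{[j]} B₂^{[j]} B₃^{[j]}] } (the block-diagonal matrix with diagonal blocks A₁^{[j]}, A₂^{[j]}, A₃^{[j]} stacked on top of the row-concatenation [B₁^{[j]} B₂^{[j]} B₃^{[j]}]), and form the matrix M' in the same way after deleting the A₂ and B₂ blocks, i.e., whose j-th column block is col{ diag{A₁^{[j]}, A₃^{[j]}}, [B₁^{[j]} B₃^{[j]}] }. If the row-concatenated matrix [A₂^{[1]} A₂^{[2]} ⋯ A₂^{[m]}] has full column rank, then M has full column rank if and only if M' has full column rank. -/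
/-!
Move the rows of the `A₂` blocks to the bottom and the columns of the `A₂` and `B₂` blocks to
the right. This reorders `M` into the block upper triangular matrix
`[[M', C], [0, [A₂^{[1]} ⋯ A₂^{[m]}]]]`, where `C` holds the `B₂` blocks. A kernel vector of such
a matrix has vanishing lower part as soon as the lower right block has trivial kernel, so the
kernel of `M` is that of `M'` padded with zeros.
-/

open Matrix

noncomputable section

section

variable {m n m' n' : Type*} [Fintype m] [Fintype n] [Fintype m'] [Fintype n']

theorem fcr_iff_mulVec_injective (A : Matrix m n ℝ) : FCR A ↔ Function.Injective A.mulVec := by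
  rw [mulVec_injective_iff, linearIndependent_iff_card_eq_finrank_span, FCR,
    rank_eq_finrank_span_cols, Set.finrank, eq_comm]

theorem fcr_iff_forall_mulVec_eq_zero (A : Matrix m n ℝ) : FCR A ↔ ∀ v, A *ᵥ v = 0 → v = 0 := by
  rw [fcr_iff_mulVec_injective, ← ker_mulVecLin_eq_bot_iff, LinearMap.ker_eq_bot, coe_mulVecLin]

theorem fcr_submatrix_iff {m₀ n₀ : Type*} [Fintype m₀] [Fintype n₀] (A : Matrix m n ℝ)
    (e : m₀ ≃ m) (f : n₀ ≃ n) : FCR (A.submatrix e f) ↔ FCR A := by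
  rw [FCR, FCR, rank_submatrix, Fintype.card_congr f]

theorem fcr_fromBlocks_zero₂₁_iff {A : Matrix m n ℝ} (B : Matrix m n' ℝ) {D : Matrix m' n' ℝ}
    (hD : FCR D) : FCR (fromBlocks A B 0 D) ↔ FCR A := by
  simp only [fcr_iff_forall_mulVec_eq_zero, fromBlocks_mulVec, zero_mulVec, zero_add] at hD ⊢
  constructor
  · intro h v hv
    have := h (Sum.elim v 0) (by simp [hv])
    simpa using congrArg (· ∘ Sum.inl) this
  · intro h x hx
    rw [← Sum.elim_zero_zero, Sum.elim_eq_iff] at hx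
    obtain ⟨hAB, hDx⟩ := hx
    have hx₂ : x ∘ Sum.inr = 0 := hD _ hDx
    rw [hx₂, mulVec_zero, add_zero] at hAB
    rw [← Sum.elim_comp_inl_inr x, h _ hAB, hx₂, Sum.elim_zero_zero]

end

def Equiv.sumSumInsertMiddle (α β γ δ : Type*) : ((α ⊕ γ) ⊕ δ) ⊕ β ≃ (α ⊕ (β ⊕ γ)) ⊕ δ where
  toFun
    | .inl (.inl (.inl a)) => .inl (.inl a)
    | .inl (.inl (.inr c)) => .inl (.inr (.inr c))
    | .inl (.inr d) => .inr d
    | .inr b => .inl (.inr (.inl b))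
  invFun
    | .inl (.inl a) => .inl (.inl (.inl a))
    | .inl (.inr (.inl b)) => .inr b
    | .inl (.inr (.inr c)) => .inl (.inl (.inr c))
    | .inr d => .inl (.inr d)
  left_inv := by rintro (((a | c) | d) | b) <;> rfl
  right_inv := by rintro ((a | b | c) | d) <;> rfl

def Equiv.sigmaSumInsertMiddle {ι : Type*} (α β γ : ι → Type*) :
    (Σ i, α i ⊕ γ i) ⊕ (Σ i, β i) ≃ Σ i, α i ⊕ (β i ⊕ γ i) where
  toFun
    | .inl ⟨i, .inl a⟩ => ⟨i, .inl a⟩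
    | .inl ⟨i, .inr c⟩ => ⟨i, .inr (.inr c)⟩
    | .inr ⟨i, b⟩ => ⟨i, .inr (.inl b)⟩
  invFun
    | ⟨i, .inl a⟩ => .inl ⟨i, .inl a⟩
    | ⟨i, .inr (.inl b)⟩ => .inr ⟨i, b⟩
    | ⟨i, .inr (.inr c)⟩ => .inl ⟨i, .inr c⟩
  left_inv := by rintro (⟨i, a | c⟩ | ⟨i, b⟩) <;> rfl
  right_inv := by rintro ⟨i, a | b | c⟩ <;> rfl

/-- Lemma 3: with column blocks indexed by `j : Fin mb`, if the row-concatenated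
matrix `[A₂^{[1]} ⋯ A₂^{[mb]}]` has full column rank, then the matrix `M` whose
`j`-th column block is `col{diag{A₁^{[j]}, A₂^{[j]}, A₃^{[j]}}, [B₁^{[j]} B₂^{[j]} B₃^{[j]}]}`
has full column rank iff the matrix `M'` whose `j`-th column block is
`col{diag{A₁^{[j]}, A₃^{[j]}}, [B₁^{[j]} B₃^{[j]}]}` has full column rank. -/
theorem blockDiag_fcr_iff_delete_middle (mb p1 p2 p3 s : ℕ)
    (q1 q2 q3 : Fin mb → ℕ)
    (A1 : ∀ j, Matrix (Fin p1) (Fin (q1 j)) ℝ)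
    (A2 : ∀ j, Matrix (Fin p2) (Fin (q2 j)) ℝ)
    (A3 : ∀ j, Matrix (Fin p3) (Fin (q3 j)) ℝ)
    (B1 : ∀ j, Matrix (Fin s) (Fin (q1 j)) ℝ)
    (B2 : ∀ j, Matrix (Fin s) (Fin (q2 j)) ℝ)
    (B3 : ∀ j, Matrix (Fin s) (Fin (q3 j)) ℝ)
    (hA2 : FCR (Matrix.of fun (r : Fin p2) (c : Σ j : Fin mb, Fin (q2 j)) =>
      A2 c.1 r c.2)) :
    FCR (Matrix.of fun (r : (Fin p1 ⊕ (Fin p2 ⊕ Fin p3)) ⊕ Fin s)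
        (c : Σ j : Fin mb, Fin (q1 j) ⊕ (Fin (q2 j) ⊕ Fin (q3 j))) =>
        Matrix.fromRows
          (Matrix.fromBlocks (A1 c.1) 0 0 (Matrix.fromBlocks (A2 c.1) 0 0 (A3 c.1)))
          (Matrix.fromCols (B1 c.1) (Matrix.fromCols (B2 c.1) (B3 c.1))) r c.2) ↔
      FCR (Matrix.of fun (r : (Fin p1 ⊕ Fin p3) ⊕ Fin s)
        (c : Σ j : Fin mb, Fin (q1 j) ⊕ Fin (q3 j)) =>
        Matrix.fromRows (Matrix.fromBlocks (A1 c.1) 0 0 (A3 c.1))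
          (Matrix.fromCols (B1 c.1) (B3 c.1)) r c.2) := by
  rw [← fcr_submatrix_iff _ (Equiv.sumSumInsertMiddle _ _ _ _)
    (Equiv.sigmaSumInsertMiddle (fun j => Fin (q1 j)) (fun j => Fin (q2 j)) (fun j => Fin (q3 j)))]
  convert fcr_fromBlocks_zero₂₁_iff
    (fromRows 0 (of fun r (c : Σ j, Fin (q2 j)) => B2 c.1 r c.2)) hA2 using 2
  ext (((r | r) | r) | r) (⟨j, c | c⟩ | ⟨j, c⟩) <;> rfl
end
end

section
/- Let E be an m×n real matrix of rank r with SVD-partition U = [U₁ U₂], V = [V₁ V₂], S. Let B_x be an m×u real matrix and B_z a z×u real matrix. If the stacked matrix col{U₂ᵀ·B_x, B_z} has full row rank, then the matrix [U₁ B_x] (horizontal concatenation of U₁ and B_x) has full row rank. -/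
open Matrix

noncomputable section

/-- A real matrix has full row rank (FRR) iff its rank equals its number of rows. -/
def FRR {m n : Type*} [Fintype m] [Fintype n] (A : Matrix m n ℝ) : Prop :=
  A.rank = Fintype.card m

/-- `E` is an `m × n` real matrix of rank `r` with SVD-partition
`U = [U₁ U₂]`, `V = [V₁ V₂]`, `S`: the matrices `U = [U₁ U₂]` and `V = [V₁ V₂]` are
orthogonal, `S` is an `r × r` diagonal matrix with positive diagonal entries,
and `E = U₁ * S * V₁ᵀ`. -/
def IsSVDPartition {m n r : ℕ} (E : Matrix (Fin m) (Fin n) ℝ)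
    (U₁ : Matrix (Fin m) (Fin r) ℝ) (U₂ : Matrix (Fin m) (Fin (m - r)) ℝ)
    (V₁ : Matrix (Fin n) (Fin r) ℝ) (V₂ : Matrix (Fin n) (Fin (n - r)) ℝ)
    (S : Matrix (Fin r) (Fin r) ℝ) : Prop :=
  r ≤ m ∧ r ≤ n ∧
    (Matrix.fromCols U₁ U₂)ᵀ * Matrix.fromCols U₁ U₂ = 1 ∧
    (Matrix.fromCols V₁ V₂)ᵀ * Matrix.fromCols V₁ V₂ = 1 ∧
    (∃ d : Fin r → ℝ, (∀ i, 0 < d i) ∧ S = Matrix.diagonal d) ∧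
    E = U₁ * S * V₁ᵀ ∧ E.rank = r

/-! Since `[U₁ U₂]` is square, `Uᵀ U = 1` also gives `U Uᵀ = U₁ U₁ᵀ + U₂ U₂ᵀ = 1`.
If `c [U₁ B_x] = 0`, then `c U₁ = 0`, so `c = (c U₂) U₂ᵀ` and `(c U₂)(U₂ᵀ B_x) = c B_x = 0`.
As `U₂ᵀ B_x` is the top block of a full-row-rank matrix, `c U₂ = 0`, hence `c = 0`. -/

lemma frr_iff_linearIndependent_row {a b : Type*} [Fintype a] [Fintype b] (M : Matrix a b ℝ) :
    FRR M ↔ LinearIndependent ℝ M.row := by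
  rw [FRR, rank_eq_finrank_span_row, linearIndependent_iff_card_eq_finrank_span, Set.finrank,
    eq_comm]

lemma frr_iff_vecMul_eq_zero {a b : Type*} [Fintype a] [Fintype b] (M : Matrix a b ℝ) :
    FRR M ↔ ∀ c : a → ℝ, c ᵥ* M = 0 → c = 0 := by
  rw [frr_iff_linearIndependent_row, ← vecMul_injective_iff, ← coe_vecMulLinear,
    injective_iff_map_eq_zero]
  rfl

lemma FRR.of_fromRows_left {a b c : Type*} [Fintype a] [Fintype b] [Fintype c]
    {A : Matrix a c ℝ} {B : Matrix b c ℝ} (h : FRR (fromRows A B)) : FRR A := by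
  rw [frr_iff_linearIndependent_row] at h ⊢
  exact h.comp Sum.inl Sum.inl_injective

lemma frr_fromCols_of_frr_transpose_mul {a k₁ k₂ b : Type*} [Fintype a] [DecidableEq a]
    [Fintype k₁] [Fintype k₂] [Fintype b] {U₁ : Matrix a k₁ ℝ} {U₂ : Matrix a k₂ ℝ}
    {B : Matrix a b ℝ} (hU : U₁ * U₁ᵀ + U₂ * U₂ᵀ = 1) (hB : FRR (U₂ᵀ * B)) :
    FRR (fromCols U₁ B) := by
  rw [frr_iff_vecMul_eq_zero] at hB ⊢
  intro c hc
  rw [vecMul_fromCols, ← Sum.elim_zero_zero, Sum.elim_eq_iff] at hc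
  obtain ⟨hcU₁, hcB⟩ := hc
  have hc_eq : c = (c ᵥ* U₂) ᵥ* U₂ᵀ :=
    calc c = c ᵥ* (U₁ * U₁ᵀ + U₂ * U₂ᵀ) := by rw [hU, vecMul_one]
      _ = (c ᵥ* U₂) ᵥ* U₂ᵀ := by
        rw [vecMul_add, ← vecMul_vecMul, ← vecMul_vecMul, hcU₁, zero_vecMul, zero_add]
  have hcU₂ : c ᵥ* U₂ = 0 := hB _ (by rw [← vecMul_vecMul, ← hc_eq, hcB])
  rw [hc_eq, hcU₂, zero_vecMul]

lemma IsSVDPartition.mul_transpose_add {m n r : ℕ} {E : Matrix (Fin m) (Fin n) ℝ}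
    {U₁ : Matrix (Fin m) (Fin r) ℝ} {U₂ : Matrix (Fin m) (Fin (m - r)) ℝ}
    {V₁ : Matrix (Fin n) (Fin r) ℝ} {V₂ : Matrix (Fin n) (Fin (n - r)) ℝ}
    {S : Matrix (Fin r) (Fin r) ℝ} (h : IsSVDPartition E U₁ U₂ V₁ V₂ S) :
    U₁ * U₁ᵀ + U₂ * U₂ᵀ = 1 := by
  obtain ⟨hrm, -, hU, -⟩ := h
  let e : Fin m ≃ Fin r ⊕ Fin (m - r) :=
    (finCongr (Nat.add_sub_cancel' hrm).symm).trans finSumFinEquiv.symm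
  have hUU := (mul_eq_one_comm_of_equiv e.symm).mp hU
  rwa [transpose_fromCols, fromCols_mul_fromRows] at hUU

/-- If `col{U₂ᵀ·B_x, B_z}` has full row rank, then `[U₁  B_x]` has full row rank. -/
theorem frr_concat_of_frr_col (m n r u z : ℕ)
    (E : Matrix (Fin m) (Fin n) ℝ)
    (U₁ : Matrix (Fin m) (Fin r) ℝ) (U₂ : Matrix (Fin m) (Fin (m - r)) ℝ)
    (V₁ : Matrix (Fin n) (Fin r) ℝ) (V₂ : Matrix (Fin n) (Fin (n - r)) ℝ)
    (S : Matrix (Fin r) (Fin r) ℝ)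
    (hsvd : IsSVDPartition E U₁ U₂ V₁ V₂ S)
    (Bx : Matrix (Fin m) (Fin u) ℝ) (Bz : Matrix (Fin z) (Fin u) ℝ)
    (h : FRR (Matrix.fromRows (U₂ᵀ * Bx) Bz)) :
    FRR (Matrix.fromCols U₁ Bx) :=
  frr_fromCols_of_frr_transpose_mul hsvd.mul_transpose_add h.of_fromRows_left
end
end

section
/- Let U = [U₁ U₂] be an m×m real orthogonal matrix, where U₁ has r columns and U₂ has m−r columns, and let M be any m×p real matrix. Then U₂ᵀ·M has full row rank if and only if the matrix [U₁ M] (horizontal concatenation of U₁ and M) has full row rank. -/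
open Matrix

noncomputable section

/-!
Since `U = [U₁ U₂]` is square, `UᵀU = 1` also gives `UUᵀ = 1`; blockwise, `U₂ᵀ U₁ = 0`,
`U₂ᵀ U₂ = 1` and `U₁ U₁ᵀ + U₂ U₂ᵀ = 1`. A row vector
`v` annihilates `[U₁ M]` iff `v U₁ = 0` and `v M = 0`; such `v` is then `w U₂ᵀ` with `w = v U₂`,
and `w` annihilates `U₂ᵀ M`. Conversely `w ↦ w U₂ᵀ` carries the left kernel of `U₂ᵀ M`
injectively into that of `[U₁ M]`. So one left kernel is trivial iff the other is.
-/

variable {m n r s p : Type*} [Fintype m] [Fintype n] [Fintype r] [Fintype s] [Fintype p]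

theorem frr_iff_linearIndependent_row_s5 (A : Matrix m n ℝ) : FRR A ↔ LinearIndependent ℝ A.row := by
  rw [FRR, rank_eq_finrank_span_row, linearIndependent_iff_card_eq_finrank_span, Set.finrank,
    eq_comm]

theorem frr_iff_vecMul_eq_zero_s5 (A : Matrix m n ℝ) : FRR A ↔ ∀ v : m → ℝ, v ᵥ* A = 0 → v = 0 := by
  rw [frr_iff_linearIndependent_row_s5, ← vecMul_injective_iff, ← coe_vecMulLinear,
    injective_iff_map_eq_zero]
  rfl

theorem vecMul_fromCols_eq_zero_iff {k l : Type*} (A : Matrix m k ℝ) (B : Matrix m l ℝ)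
    (v : m → ℝ) : v ᵥ* fromCols A B = 0 ↔ v ᵥ* A = 0 ∧ v ᵥ* B = 0 := by
  rw [vecMul_fromCols, ← Sum.elim_zero_zero, Sum.elim_eq_iff]

theorem frr_transpose_mul_iff_frr_fromCols [DecidableEq m] [DecidableEq s]
    (U₁ : Matrix m r ℝ) (U₂ : Matrix m s ℝ) (h₂₁ : U₂ᵀ * U₁ = 0) (h₂₂ : U₂ᵀ * U₂ = 1)
    (hU : U₁ * U₁ᵀ + U₂ * U₂ᵀ = 1) (M : Matrix m p ℝ) :
    FRR (U₂ᵀ * M) ↔ FRR (fromCols U₁ M) := by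
  simp only [frr_iff_vecMul_eq_zero_s5, vecMul_fromCols_eq_zero_iff]
  constructor
  · rintro h v ⟨hv₁, hvM⟩
    have hv : v = (v ᵥ* U₂) ᵥ* U₂ᵀ := by
      calc v = v ᵥ* (U₁ * U₁ᵀ + U₂ * U₂ᵀ) := by rw [hU, vecMul_one]
        _ = (v ᵥ* U₂) ᵥ* U₂ᵀ := by
          rw [vecMul_add, ← vecMul_vecMul, ← vecMul_vecMul, hv₁, zero_vecMul, zero_add]
    have hw : v ᵥ* U₂ = 0 := h _ <| by rw [← vecMul_vecMul, ← hv, hvM]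
    rw [hv, hw, zero_vecMul]
  · intro h w hw
    have hv : w ᵥ* U₂ᵀ = 0 := h _
      ⟨by rw [vecMul_vecMul, h₂₁, vecMul_zero], by rw [vecMul_vecMul, hw]⟩
    calc w = (w ᵥ* U₂ᵀ) ᵥ* U₂ := by rw [vecMul_vecMul, h₂₂, vecMul_one]
      _ = 0 := by rw [hv, zero_vecMul]

/-- Let `U = [U₁ U₂]` be an `m × m` orthogonal matrix, `U₁` with `r` columns and
`U₂` with `m - r` columns, and `M` an `m × p` matrix. Then `U₂ᵀ·M` has full row
rank iff `[U₁  M]` has full row rank. -/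
theorem transpose_mul_frr_iff_fromColumns_frr (m r p : ℕ) (hr : r ≤ m)
    (U₁ : Matrix (Fin m) (Fin r) ℝ) (U₂ : Matrix (Fin m) (Fin (m - r)) ℝ)
    (hU : (Matrix.fromCols U₁ U₂)ᵀ * Matrix.fromCols U₁ U₂ = 1)
    (M : Matrix (Fin m) (Fin p) ℝ) :
    FRR (U₂ᵀ * M) ↔ FRR (Matrix.fromCols U₁ M) := by
  have hU' : Matrix.fromCols U₁ U₂ * (Matrix.fromCols U₁ U₂)ᵀ = 1 :=
    (mul_eq_one_comm_of_card_eq (Fin r ⊕ Fin (m - r)) (Fin m) ℝ (by simp; omega)).mp hU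
  rw [transpose_fromCols, fromRows_mul_fromCols, ← fromBlocks_one, fromBlocks_inj] at hU
  rw [transpose_fromCols, fromCols_mul_fromRows] at hU'
  exact frr_transpose_mul_iff_frr_fromCols U₁ U₂ hU.2.2.1 hU.2.2.2 hU' M
end
end

section
/- Let E be an m×n real matrix of rank r with SVD-partition U = [U₁ U₂], V = [V₁ V₂], S. Let A_xx (m×n), A_xv (m×v), A_zx (z×n), A_zv (z×v) and Φ (v×z) be real matrices such that I − A_zv·Φ is invertible. Define Ω = U₂ᵀ·(A_xx + A_xv·Φ·(I − A_zv·Φ)⁻¹·A_zx)·V₂ and the block matrix Π = [[U₂ᵀ·A_xx·V₂, U₂ᵀ·A_xv], [−Φ·A_zx·V₂, I − Φ·A_zv]]. Then Ω has full column rank if and only if Π has full column rank. -/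
open Matrix

noncomputable section

/-!
Eliminating the second block of unknowns of `Π` leaves its Schur complement
`U₂ᵀ·A_xx·V₂ + U₂ᵀ·A_xv·(I − Φ·A_zv)⁻¹·Φ·A_zx·V₂`, and the push-through identity
`Φ·(I − A_zv·Φ)⁻¹ = (I − Φ·A_zv)⁻¹·Φ` identifies it with `Ω`. A block matrix with an
invertible lower-right corner has trivial kernel exactly when its Schur complement does,
since the block LDU factorisation has unipotent outer factors.
-/

section PushThrough

variable {α m n : Type*} [CommRing α] [Fintype m] [Fintype n] [DecidableEq m] [DecidableEq n]

theorem Matrix.mul_inv_one_sub_mul_comm (A : Matrix m n α) (B : Matrix n m α)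
    (h : IsUnit (1 - B * A)) : A * (1 - B * A)⁻¹ = (1 - A * B)⁻¹ * A := by
  have hBA : IsUnit (1 - B * A).det := (isUnit_iff_isUnit_det _).1 h
  have hAB : IsUnit (1 - A * B).det := by rwa [det_one_sub_mul_comm]
  have hcomm : (1 - A * B) * A = A * (1 - B * A) := by
    simp only [Matrix.sub_mul, Matrix.mul_sub, Matrix.one_mul, Matrix.mul_one, Matrix.mul_assoc]
  calc A * (1 - B * A)⁻¹ = (1 - A * B)⁻¹ * ((1 - A * B) * A) * (1 - B * A)⁻¹ := by
        rw [← Matrix.mul_assoc, nonsing_inv_mul _ hAB, Matrix.one_mul]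
    _ = (1 - A * B)⁻¹ * A := by
        rw [hcomm, Matrix.mul_assoc, Matrix.mul_assoc, mul_nonsing_inv _ hBA, Matrix.mul_one]

end PushThrough

section FullColumnRank

variable {l m n o : Type*} [Fintype l] [Fintype m] [Fintype n] [Fintype o]

theorem fcr_iff_mulVec_eq_zero (A : Matrix m n ℝ) : FCR A ↔ ∀ x, A *ᵥ x = 0 → x = 0 := by
  have h := LinearMap.finrank_range_add_finrank_ker A.mulVecLin
  rw [Module.finrank_fintype_fun_eq_card] at h
  have hker : (∀ x, A *ᵥ x = 0 → x = 0) ↔ LinearMap.ker A.mulVecLin = ⊥ := by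
    simp only [LinearMap.ker_eq_bot', mulVecLin_apply]
  rw [FCR, rank, hker, ← Submodule.finrank_eq_zero]
  omega

theorem fcr_fromBlocks_zero_iff [DecidableEq o] (A : Matrix m n ℝ) {D : Matrix o o ℝ}
    (hD : IsUnit D) : FCR (fromBlocks A 0 0 D) ↔ FCR A := by
  have hDinj : Function.Injective D.mulVec := mulVec_injective_iff_isUnit.2 hD
  simp only [fcr_iff_mulVec_eq_zero, fromBlocks_mulVec, Matrix.zero_mulVec, add_zero, zero_add]
  constructor
  · intro h x hx
    simpa using congrArg (· ∘ Sum.inl) (h (Sum.elim x 0) (by simp [hx]))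
  · intro h u hu
    have hx : A *ᵥ (u ∘ Sum.inl) = 0 := funext fun i => congrFun hu (Sum.inl i)
    have hy : D *ᵥ (u ∘ Sum.inr) = 0 := funext fun i => congrFun hu (Sum.inr i)
    have hy0 : u ∘ Sum.inr = 0 := hDinj (by rw [hy, mulVec_zero])
    ext (i | i)
    · exact congrFun (h _ hx) i
    · exact congrFun hy0 i

theorem fcr_fromBlocks_iff_fcr_schur [DecidableEq l] [DecidableEq m] [DecidableEq o]
    (A : Matrix l m ℝ) (B : Matrix l o ℝ) (C : Matrix o m ℝ) {D : Matrix o o ℝ}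
    (hD : IsUnit D) : FCR (fromBlocks A B C D) ↔ FCR (A - B * D⁻¹ * C) := by
  let := hD.invertible
  have hL : IsUnit (fromBlocks (1 : Matrix l l ℝ) (B * ⅟D) 0 1).det := by simp
  have hR : IsUnit (fromBlocks (1 : Matrix m m ℝ) 0 (⅟D * C) 1).det := by simp
  rw [fromBlocks_eq_of_invertible₂₂, ← invOf_eq_nonsing_inv, FCR, FCR,
    rank_mul_eq_left_of_isUnit_det _ _ hR, rank_mul_eq_right_of_isUnit_det _ _ hL,
    ← FCR, ← FCR, fcr_fromBlocks_zero_iff _ hD]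

end FullColumnRank

theorem omega_fcr_iff_pi_fcr_general (m n r v z : ℕ)
    (U₂ : Matrix (Fin m) (Fin (m - r)) ℝ)
    (V₂ : Matrix (Fin n) (Fin (n - r)) ℝ)
    (Axx : Matrix (Fin m) (Fin n) ℝ) (Axv : Matrix (Fin m) (Fin v) ℝ)
    (Azx : Matrix (Fin z) (Fin n) ℝ) (Azv : Matrix (Fin z) (Fin v) ℝ)
    (Φ : Matrix (Fin v) (Fin z) ℝ) (hinv : IsUnit (1 - Azv * Φ)) :
    FCR (U₂ᵀ * (Axx + Axv * Φ * (1 - Azv * Φ)⁻¹ * Azx) * V₂) ↔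
      FCR (Matrix.fromBlocks (U₂ᵀ * Axx * V₂) (U₂ᵀ * Axv)
        (-(Φ * Azx * V₂)) (1 - Φ * Azv)) := by
  have hF : IsUnit (1 - Φ * Azv) := by
    rw [isUnit_iff_isUnit_det, det_one_sub_mul_comm, ← isUnit_iff_isUnit_det]
    exact hinv
  have hΩ : U₂ᵀ * (Axx + Axv * Φ * (1 - Azv * Φ)⁻¹ * Azx) * V₂ =
      U₂ᵀ * Axx * V₂ - U₂ᵀ * Axv * (1 - Φ * Azv)⁻¹ * -(Φ * Azx * V₂) := by
    rw [Matrix.mul_assoc Axv, mul_inv_one_sub_mul_comm _ _ hinv]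
    simp only [Matrix.mul_add, Matrix.add_mul, Matrix.mul_neg, sub_neg_eq_add, Matrix.mul_assoc]
  rw [hΩ, fcr_fromBlocks_iff_fcr_schur _ _ _ hF]

/-- `Ω = U₂ᵀ·(A_xx + A_xv·Φ·(I − A_zv·Φ)⁻¹·A_zx)·V₂` has full column rank iff the
block matrix `Π = [[U₂ᵀ·A_xx·V₂, U₂ᵀ·A_xv], [−Φ·A_zx·V₂, I − Φ·A_zv]]` has full
column rank. -/
theorem omega_fcr_iff_pi_fcr (m n r v z : ℕ)
    (E : Matrix (Fin m) (Fin n) ℝ)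
    (U₁ : Matrix (Fin m) (Fin r) ℝ) (U₂ : Matrix (Fin m) (Fin (m - r)) ℝ)
    (V₁ : Matrix (Fin n) (Fin r) ℝ) (V₂ : Matrix (Fin n) (Fin (n - r)) ℝ)
    (S : Matrix (Fin r) (Fin r) ℝ)
    (hsvd : IsSVDPartition E U₁ U₂ V₁ V₂ S)
    (Axx : Matrix (Fin m) (Fin n) ℝ) (Axv : Matrix (Fin m) (Fin v) ℝ)
    (Azx : Matrix (Fin z) (Fin n) ℝ) (Azv : Matrix (Fin z) (Fin v) ℝ)
    (Φ : Matrix (Fin v) (Fin z) ℝ) (hinv : IsUnit (1 - Azv * Φ)) :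
    FCR (U₂ᵀ * (Axx + Axv * Φ * (1 - Azv * Φ)⁻¹ * Azx) * V₂) ↔
      FCR (Matrix.fromBlocks (U₂ᵀ * Axx * V₂) (U₂ᵀ * Axv)
        (-(Φ * Azx * V₂)) (1 - Φ * Azv)) :=
  omega_fcr_iff_pi_fcr_general m n r v z U₂ V₂ Axx Axv Azx Azv Φ hinv
end
end

section
/- Let E be an m×n real matrix of rank r with SVD-partition U = [U₁ U₂], V = [V₁ V₂], S. Let A_xx (m×n), A_xv (m×v), A_zx (z×n), A_zv (z×v) and Φ (v×z) be real matrices such that I − A_zv·Φ is invertible. If the matrix U₂ᵀ·[A_xx·V₂ A_xv] has full column rank, then the matrix Ω = U₂ᵀ·(A_xx + A_xv·Φ·(I − A_zv·Φ)⁻¹·A_zx)·V₂ has full column rank. -/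
open Matrix

noncomputable section

/-!
Writing `K = Φ (I - A_zv Φ)⁻¹ A_zx V₂`, we have `Ω = U₂ᵀ A_xx V₂ + (U₂ᵀ A_xv) K`, so
`Ω y = U₂ᵀ [A_xx V₂  A_xv] (y, K y)`. Hence `Ω y = 0` forces `(y, K y) = 0`, in particular `y = 0`.
-/

lemma fcr_iff_ker_mulVecLin_eq_bot {m n : Type*} [Fintype m] [Fintype n] (A : Matrix m n ℝ) :
    FCR A ↔ LinearMap.ker A.mulVecLin = ⊥ := by
  have h := A.mulVecLin.finrank_range_add_finrank_ker
  rw [Module.finrank_fintype_fun_eq_card] at h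
  rw [FCR, rank, ← Submodule.finrank_eq_zero]
  omega

lemma FCR.add_mul_of_fromCols {m n p : Type*} [Fintype m] [Fintype n] [Fintype p]
    {A : Matrix m n ℝ} {B : Matrix m p ℝ} (h : FCR (fromCols A B)) (K : Matrix p n ℝ) :
    FCR (A + B * K) := by
  rw [fcr_iff_ker_mulVecLin_eq_bot, ker_mulVecLin_eq_bot_iff] at h ⊢
  intro x hx
  have hxKx : fromCols A B *ᵥ Sum.elim x (K *ᵥ x) = 0 := by
    rwa [fromCols_mulVec_sumElim, mulVec_mulVec, ← add_mulVec]
  funext i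
  exact congrFun (h _ hxKx) (Sum.inl i)

theorem omega_fcr_of_concat_fcr_general (m n r v z : ℕ)
    (U₂ : Matrix (Fin m) (Fin (m - r)) ℝ)
    (V₂ : Matrix (Fin n) (Fin (n - r)) ℝ)
    (Axx : Matrix (Fin m) (Fin n) ℝ) (Axv : Matrix (Fin m) (Fin v) ℝ)
    (Azx : Matrix (Fin z) (Fin n) ℝ) (Azv : Matrix (Fin z) (Fin v) ℝ)
    (Φ : Matrix (Fin v) (Fin z) ℝ)
    (h : FCR (U₂ᵀ * Matrix.fromCols (Axx * V₂) Axv)) :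
    FCR (U₂ᵀ * (Axx + Axv * Φ * (1 - Azv * Φ)⁻¹ * Azx) * V₂) := by
  have hΩ : U₂ᵀ * (Axx + Axv * Φ * (1 - Azv * Φ)⁻¹ * Azx) * V₂ =
      U₂ᵀ * (Axx * V₂) + U₂ᵀ * Axv * (Φ * (1 - Azv * Φ)⁻¹ * Azx * V₂) := by
    simp only [Matrix.mul_add, Matrix.add_mul, Matrix.mul_assoc]
  rw [mul_fromCols] at h
  rw [hΩ]
  exact h.add_mul_of_fromCols _

/-- If `U₂ᵀ·[A_xx·V₂  A_xv]` has full column rank, then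
`Ω = U₂ᵀ·(A_xx + A_xv·Φ·(I − A_zv·Φ)⁻¹·A_zx)·V₂` has full column rank. -/
theorem omega_fcr_of_concat_fcr (m n r v z : ℕ)
    (E : Matrix (Fin m) (Fin n) ℝ)
    (U₁ : Matrix (Fin m) (Fin r) ℝ) (U₂ : Matrix (Fin m) (Fin (m - r)) ℝ)
    (V₁ : Matrix (Fin n) (Fin r) ℝ) (V₂ : Matrix (Fin n) (Fin (n - r)) ℝ)
    (S : Matrix (Fin r) (Fin r) ℝ)
    (hsvd : IsSVDPartition E U₁ U₂ V₁ V₂ S)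
    (Axx : Matrix (Fin m) (Fin n) ℝ) (Axv : Matrix (Fin m) (Fin v) ℝ)
    (Azx : Matrix (Fin z) (Fin n) ℝ) (Azv : Matrix (Fin z) (Fin v) ℝ)
    (Φ : Matrix (Fin v) (Fin z) ℝ) (hinv : IsUnit (1 - Azv * Φ))
    (h : FCR (U₂ᵀ * Matrix.fromCols (Axx * V₂) Axv)) :
    FCR (U₂ᵀ * (Axx + Axv * Φ * (1 - Azv * Φ)⁻¹ * Azx) * V₂) :=
  omega_fcr_of_concat_fcr_general m n r v z U₂ V₂ Axx Axv Azx Azv Φ h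
end
end

section
/- Let E be an m×n real matrix of rank r with SVD-partition U = [U₁ U₂], V = [V₁ V₂], S, and let A_xv (m×v), B_x (m×u), C_v (y×v), D_u (y×u) be real matrices. If the matrix [U₁ A_xv B_x] does not have full row rank, then for every u×y real matrix F with I − F·D_u invertible, the matrix [U₁, A_xv + B_x·(I − F·D_u)⁻¹·F·C_v, B_x·(I − F·D_u)⁻¹·F] does not have full row rank. -/
open Matrix

noncomputable section

theorem FRR.of_mul_right {l m n : Type*} [Fintype l] [Fintype m] [Fintype n]
    {A : Matrix m l ℝ} {P : Matrix l n ℝ} (h : FRR (A * P)) : FRR A :=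
  le_antisymm A.rank_le_card_height (h ▸ A.rank_mul_le_left P)

theorem fromCols_feedback_eq_mul {R : Type*} [CommRing R] {m r v u y : Type*} [Fintype r]
    [Fintype v] [Fintype u] [Fintype y] [DecidableEq r] [DecidableEq v] [DecidableEq u]
    (U : Matrix m r R) (A : Matrix m v R) (B : Matrix m u R) (C : Matrix y v R)
    (K : Matrix u y R) :
    fromCols U (fromCols (A + B * K * C) (B * K)) =
      fromCols U (fromCols A B) *
        (fromBlocks 1 0 0 (fromBlocks 1 0 (K * C) K) : Matrix (r ⊕ v ⊕ u) (r ⊕ v ⊕ y) R) := by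
  rw [fromCols_mul_fromBlocks, fromCols_mul_fromBlocks]
  simp [Matrix.mul_assoc]

theorem not_frr_feedback_general (m r v u y : ℕ)
    (U₁ : Matrix (Fin m) (Fin r) ℝ)
    (Axv : Matrix (Fin m) (Fin v) ℝ) (Bx : Matrix (Fin m) (Fin u) ℝ)
    (Cv : Matrix (Fin y) (Fin v) ℝ) (Du : Matrix (Fin y) (Fin u) ℝ)
    (h : ¬ FRR (Matrix.fromCols U₁ (Matrix.fromCols Axv Bx)))
    (F : Matrix (Fin u) (Fin y) ℝ) :
    ¬ FRR (Matrix.fromCols U₁ (Matrix.fromCols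
        (Axv + Bx * (1 - F * Du)⁻¹ * F * Cv) (Bx * (1 - F * Du)⁻¹ * F))) := by
  intro hfb
  rw [Matrix.mul_assoc Bx _ F, fromCols_feedback_eq_mul U₁ Axv Bx Cv ((1 - F * Du)⁻¹ * F)] at hfb
  exact h hfb.of_mul_right

/-- If `[U₁  A_xv  B_x]` does not have full row rank, then for every `F` with
`I − F·D_u` invertible, the matrix
`[U₁, A_xv + B_x·(I − F·D_u)⁻¹·F·C_v, B_x·(I − F·D_u)⁻¹·F]` does not have full
row rank. -/
theorem not_frr_feedback (m n r v u y : ℕ)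
    (E : Matrix (Fin m) (Fin n) ℝ)
    (U₁ : Matrix (Fin m) (Fin r) ℝ) (U₂ : Matrix (Fin m) (Fin (m - r)) ℝ)
    (V₁ : Matrix (Fin n) (Fin r) ℝ) (V₂ : Matrix (Fin n) (Fin (n - r)) ℝ)
    (S : Matrix (Fin r) (Fin r) ℝ)
    (hsvd : IsSVDPartition E U₁ U₂ V₁ V₂ S)
    (Axv : Matrix (Fin m) (Fin v) ℝ) (Bx : Matrix (Fin m) (Fin u) ℝ)
    (Cv : Matrix (Fin y) (Fin v) ℝ) (Du : Matrix (Fin y) (Fin u) ℝ)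
    (h : ¬ FRR (Matrix.fromCols U₁ (Matrix.fromCols Axv Bx)))
    (F : Matrix (Fin u) (Fin y) ℝ) (hF : IsUnit (1 - F * Du)) :
    ¬ FRR (Matrix.fromCols U₁ (Matrix.fromCols
        (Axv + Bx * (1 - F * Du)⁻¹ * F * Cv) (Bx * (1 - F * Du)⁻¹ * F))) :=
  not_frr_feedback_general m r v u y U₁ Axv Bx Cv Du h F
end
end
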